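/- Let N ≥ 3, α ∈ (0, N), and p = 1 + α/N. For the Choquard equation −Δu + u = (I_α*|u|^p)|u|^(p-2)u, the two identities ∫(|∇u|²+|u|²) = D and ((N-2)/2)∫|∇u|² + (N/2)∫|u|² = ((N+α)/(2p))·D (with D = ∫(I_α*|u|^p)|u|^p) imply ∫|∇u|² = 0, hence every H¹ solution is constant, hence zero. -/

import Mathlib

/-!
At `p = 1 + α/N` the Pohozaev coefficient `(N + α)/(2p)` equals `N/2`, so subtracting `N/2`
times the testing identity from the Pohozaev identity leaves `-∫|∇u|² = 0`. A `C¹` function with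
vanishing gradient is constant, and the only constant in `L²` of the infinite Lebesgue measure
is zero.
-/

open MeasureTheory

theorem add_div_two_mul_one_add_div {N α : ℝ} (hN : N ≠ 0) (hNα : N + α ≠ 0) :
    (N + α) / (2 * (1 + α / N)) = N / 2 := by
  have h : 1 + α / N = (N + α) / N := by field_simp
  rw [h]
  field_simp

theorem Continuous.eq_zero_of_integral_eq_zero_of_nonneg {X : Type*} [TopologicalSpace X]
    [MeasurableSpace X] [OpensMeasurableSpace X] {μ : Measure X} [μ.IsOpenPosMeasure]
    {f : X → ℝ} (hf : Continuous f) (hf_nonneg : 0 ≤ f) (hfi : Integrable f μ)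
    (h : ∫ x, f x ∂μ = 0) : f = 0 :=
  (hf.ae_eq_iff_eq μ continuous_const).mp ((integral_eq_zero_iff_of_nonneg hf_nonneg hfi).mp h)

theorem fderiv_eq_zero_of_integral_norm_fderiv_sq_eq_zero {E F : Type*} [NormedAddCommGroup E]
    [NormedSpace ℝ E] [MeasurableSpace E] [OpensMeasurableSpace E] {μ : Measure E}
    [μ.IsOpenPosMeasure] [NormedAddCommGroup F] [NormedSpace ℝ F] {u : E → F}
    (hu : ContDiff ℝ 1 u) (hi : Integrable (fun x => ‖fderiv ℝ u x‖ ^ 2) μ)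
    (h : ∫ x, ‖fderiv ℝ u x‖ ^ 2 ∂μ = 0) (x : E) : fderiv ℝ u x = 0 := by
  have hcont : Continuous fun x => ‖fderiv ℝ u x‖ ^ 2 :=
    (hu.continuous_fderiv one_ne_zero).norm.pow 2
  have hx := congrFun (hcont.eq_zero_of_integral_eq_zero_of_nonneg (fun _ => by positivity) hi h) x
  simpa using hx

theorem eq_zero_of_memLp_of_forall_eq {X F : Type*} [MeasurableSpace X] {μ : Measure X}
    [NormedAddCommGroup F] {p : ENNReal} (hp0 : p ≠ 0) (hp : p ≠ ⊤)
    (hμ : μ Set.univ = ⊤) {u : X → F} (hu : MemLp u p μ) (hconst : ∀ x y, u x = u y) :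
    u = 0 := by
  funext x
  rw [show u = fun _ => u x from funext fun y => hconst y x, memLp_const_iff hp0 hp, hμ] at hu
  simpa using hu

theorem choquard_lower_endpoint_nonexistence_general
    (N : ℕ) (hN : 3 ≤ N) (α p : ℝ) (hα : 0 < α)
    (hp : p = 1 + α / N)
    (u : EuclideanSpace ℝ (Fin N) → ℝ)
    (hreg : ContDiff ℝ 1 u) (hu2 : MemLp u 2 volume)
    (hgrad : Integrable (fun x => ‖fderiv ℝ u x‖ ^ 2) volume)
    (D : ℝ)
    (htest : (∫ x, ‖fderiv ℝ u x‖ ^ 2) + (∫ x, (u x) ^ 2) = D)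
    (hpoho : ((N : ℝ) - 2) / 2 * (∫ x, ‖fderiv ℝ u x‖ ^ 2)
        + (N : ℝ) / 2 * (∫ x, (u x) ^ 2) = ((N : ℝ) + α) / (2 * p) * D) :
    (∫ x, ‖fderiv ℝ u x‖ ^ 2) = 0 ∧ u =ᵐ[volume] 0 := by
  have : NeZero N := ⟨by omega⟩
  have hcoeff : ((N : ℝ) + α) / (2 * p) = (N : ℝ) / 2 :=
    hp ▸ add_div_two_mul_one_add_div (NeZero.ne _) (by positivity)
  have hgrad0 : (∫ x, ‖fderiv ℝ u x‖ ^ 2) = 0 := by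
    rw [hcoeff, ← htest] at hpoho
    linarith
  have hconst : ∀ x y, u x = u y := is_const_of_fderiv_eq_zero (hreg.differentiable one_ne_zero)
    (fderiv_eq_zero_of_integral_norm_fderiv_sq_eq_zero hreg hgrad hgrad0)
  have hvol := measure_univ_of_isAddLeftInvariant (volume : Measure (EuclideanSpace ℝ (Fin N)))
  exact ⟨hgrad0, .of_forall <| congrFun <|
    eq_zero_of_memLp_of_forall_eq two_ne_zero ENNReal.ofNat_ne_top hvol hu2 hconst⟩

/-- Endpoint case `p = 1 + α/N` of the non-existence theorem: the testing identity and the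
Pohozaev identity force `∫|∇u|² = 0`, hence every `H¹` solution is constant, hence zero. -/
theorem choquard_lower_endpoint_nonexistence
    (N : ℕ) (hN : 3 ≤ N) (α p : ℝ) (hα : 0 < α) (hαN : α < N)
    (hp : p = 1 + α / N)
    (u : EuclideanSpace ℝ (Fin N) → ℝ)
    (hreg : ContDiff ℝ 1 u) (hu2 : MemLp u 2 volume)
    (hgrad : Integrable (fun x => ‖fderiv ℝ u x‖ ^ 2) volume)
    (D : ℝ) (hD : 0 ≤ D)
    (htest : (∫ x, ‖fderiv ℝ u x‖ ^ 2) + (∫ x, (u x) ^ 2) = D)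
    (hpoho : ((N : ℝ) - 2) / 2 * (∫ x, ‖fderiv ℝ u x‖ ^ 2)
        + (N : ℝ) / 2 * (∫ x, (u x) ^ 2) = ((N : ℝ) + α) / (2 * p) * D) :
    (∫ x, ‖fderiv ℝ u x‖ ^ 2) = 0 ∧ u =ᵐ[volume] 0 :=
  choquard_lower_endpoint_nonexistence_general N hN α p hα hp u hreg hu2 hgrad D htest hpoho
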